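/- Let K ≥ 1, let S ⊆ ℝ^K be an open path-connected set, and let C > 2. Let c₀ ∈ S have all coordinates nonzero, let β ∈ S, and let η > 0 be small enough that the open Euclidean ball B_η(β) is contained in S. Then there exist a natural number m₀ and points c₀, c₁, …, c_{m₀+1}, all belonging to S, such that for every m ∈ {0, …, m₀} and every coordinate k ∈ {1, …, K} one has |c_{m+1}^k − c_m^k| ≤ C·|c_m^k|, and such that c_{m₀+1} ∈ B_η(β). (This is the deterministic reachability core of Proposition 1: under the componentwise control |α^k − c^k| ≤ C|c^k| with C > 2, any target ball inside S can be reached from any starting center in finitely many steps.) -/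

import Mathlib

/-!
Join `c₀` to `β` by a path `γ` in `S` and fix a small `a > 0` with `a ≤ |c₀ᵏ|` for every `k`.
Sample `γ` at points `u₀ = c₀, u₁, …, u_N = β`, consecutive samples less than `(C - 2) a`
apart, and replace each `uₘ`, `m ≥ 1`, by the point `cₘ` obtained by pushing every coordinate
of `uₘ` a distance `a` away from `0`. Then every coordinate of every `cₘ` has size at least `a`
and lies within `a` of the corresponding coordinate of `uₘ`, so a step moves each coordinate by
at most `a + (C - 2) a + a = C a ≤ C |cₘᵏ|`. For `a` small the points `cₘ` stay in a tubular
neighbourhood of `γ` contained in `S`, and `c_N` lies in `B_η(β)`.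
-/

open Filter Metric Set Topology

lemma abs_sub_le_mul_abs_of_abs_sub_le {x y u v a C : ℝ} (hC : 0 ≤ C) (hx : a ≤ |x|)
    (hxu : |x - u| ≤ a) (hyv : |y - v| ≤ a) (hvu : |v - u| ≤ (C - 2) * a) :
    |y - x| ≤ C * |x| :=
  calc |y - x| ≤ |y - v| + (|v - u| + |u - x|) :=
        (abs_sub_le y v x).trans (add_le_add_right (abs_sub_le v u x) _)
    _ ≤ C * a := by rw [abs_sub_comm u x]; linarith
    _ ≤ C * |x| := mul_le_mul_of_nonneg_left hx hC

lemma exists_pos_mul_lt_and_le_abs {ι : Type*} [Finite ι] {x : ι → ℝ} (hx : ∀ k, x k ≠ 0)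
    (c : ℝ) {r : ℝ} (hr : 0 < r) : ∃ a > 0, c * a < r ∧ ∀ k, a ≤ |x k| := by
  have hsmall : ∀ᶠ a in 𝓝 (0 : ℝ), c * a < r ∧ ∀ k, a ≤ |x k| :=
    ((continuous_const_mul c).continuousAt.eventually_lt continuousAt_const (by simpa using hr)).and
      (eventually_all.2 fun k => eventually_le_nhds (abs_pos.2 (hx k)))
  obtain ⟨a, hsmall_a, ha⟩ := ((eventually_nhdsWithin_of_eventually_nhds hsmall).and
    (eventually_mem_nhdsWithin (s := Ioi (0 : ℝ)))).exists
  exact ⟨a, ha, hsmall_a⟩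

namespace Path

variable {X : Type*} [PseudoMetricSpace X] {x y : X}

lemma exists_samples_dist_succ_lt (γ : Path x y) {ε : ℝ} (hε : 0 < ε) :
    ∃ (N : ℕ) (u : ℕ → X), 0 < N ∧ u 0 = x ∧ u N = y ∧ (∀ i, u i ∈ range γ) ∧
      ∀ i, dist (u (i + 1)) (u i) < ε := by
  obtain ⟨δ, hδ, hγδ⟩ := uniformContinuous_iff.1 γ.uniformContinuous_extend ε hε
  obtain ⟨n, hn⟩ := exists_nat_one_div_lt hδ
  have hN : (0 : ℝ) < n + 1 := by positivity
  refine ⟨n + 1, fun i => γ.extend (i / (n + 1 : ℕ)), n.succ_pos, by simp, ?_,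
    fun i => γ.extend_range ▸ mem_range_self _, fun i => hγδ ?_⟩
  · simp [div_self hN.ne']
  · rw [Real.dist_eq, ← sub_div, abs_div]
    push_cast
    simpa [abs_of_pos hN] using hn

end Path

section PushAway

variable {ι : Type*}

noncomputable def pushAway (a : ℝ) (x : EuclideanSpace ℝ ι) : EuclideanSpace ℝ ι :=
  WithLp.toLp 2 fun k => if x k < 0 then x k - a else x k + a

variable {a : ℝ}

lemma abs_pushAway_apply (ha : 0 ≤ a) (x : EuclideanSpace ℝ ι) (k : ι) :
    |pushAway a x k| = |x k| + a := by
  simp only [pushAway, PiLp.toLp_apply]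
  split_ifs with h
  · rw [abs_of_neg h, abs_of_neg (by linarith)]; ring
  · rw [abs_of_nonneg (not_lt.1 h), abs_of_nonneg (by linarith [not_lt.1 h])]

lemma abs_pushAway_apply_sub (ha : 0 ≤ a) (x : EuclideanSpace ℝ ι) (k : ι) :
    |pushAway a x k - x k| = a := by
  simp only [pushAway, PiLp.toLp_apply]
  split_ifs <;> simp [abs_of_nonneg ha]

lemma dist_pushAway [Fintype ι] (ha : 0 ≤ a) (x : EuclideanSpace ℝ ι) :
    dist (pushAway a x) x = √(Fintype.card ι) * a := by
  simp [EuclideanSpace.dist_eq, Real.dist_eq, abs_pushAway_apply_sub ha, Real.sqrt_sq ha]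

noncomputable def pushAwayChain (a : ℝ) (u : ℕ → EuclideanSpace ℝ ι) : ℕ → EuclideanSpace ℝ ι
  | 0 => u 0
  | m + 1 => pushAway a (u (m + 1))

lemma dist_pushAwayChain_le [Fintype ι] (ha : 0 ≤ a) (u : ℕ → EuclideanSpace ℝ ι) (m : ℕ) :
    dist (pushAwayChain a u m) (u m) ≤ √(Fintype.card ι) * a := by
  cases m with
  | zero => simpa [pushAwayChain] using mul_nonneg (Real.sqrt_nonneg _) ha
  | succ m => exact (dist_pushAway ha _).le

lemma pushAwayChain_apply_bounds (ha : 0 ≤ a) {u : ℕ → EuclideanSpace ℝ ι}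
    (hu₀ : ∀ k, a ≤ |u 0 k|) (m : ℕ) (k : ι) :
    a ≤ |pushAwayChain a u m k| ∧ |pushAwayChain a u m k - u m k| ≤ a := by
  cases m with
  | zero => simpa [pushAwayChain] using ⟨hu₀ k, ha⟩
  | succ m =>
    simp only [pushAwayChain, abs_pushAway_apply ha, abs_pushAway_apply_sub ha]
    exact ⟨le_add_of_nonneg_left (abs_nonneg _), le_rfl⟩

lemma pushAwayChain_step [Fintype ι] {C : ℝ} (hC : 0 ≤ C) (ha : 0 ≤ a)
    {u : ℕ → EuclideanSpace ℝ ι} (hu₀ : ∀ k, a ≤ |u 0 k|) {m : ℕ}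
    (hum : dist (u (m + 1)) (u m) ≤ (C - 2) * a) (k : ι) :
    |pushAwayChain a u (m + 1) k - pushAwayChain a u m k| ≤ C * |pushAwayChain a u m k| :=
  abs_sub_le_mul_abs_of_abs_sub_le hC (pushAwayChain_apply_bounds ha hu₀ m k).1
    (pushAwayChain_apply_bounds ha hu₀ m k).2 (pushAwayChain_apply_bounds ha hu₀ (m + 1) k).2
    ((PiLp.dist_apply_le _ _ k).trans hum)

end PushAway

theorem gs_reaches_any_ball_general
    (K : ℕ)
    (S : Set (EuclideanSpace ℝ (Fin K))) (hSopen : IsOpen S)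
    (hSconn : IsPathConnected S)
    (C : ℝ) (hC : 2 < C)
    (c₀ : EuclideanSpace ℝ (Fin K)) (hc₀ : c₀ ∈ S) (hc₀ne : ∀ k, c₀ k ≠ 0)
    (β : EuclideanSpace ℝ (Fin K)) (hβ : β ∈ S)
    (η : ℝ) (hη : 0 < η) :
    ∃ (m₀ : ℕ) (c : ℕ → EuclideanSpace ℝ (Fin K)),
      c 0 = c₀ ∧
      (∀ m ≤ m₀ + 1, c m ∈ S) ∧
      (∀ m ≤ m₀, ∀ k : Fin K, |c (m + 1) k - c m k| ≤ C * |c m k|) ∧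
      c (m₀ + 1) ∈ ball β η := by
  obtain ⟨γ, hγS⟩ := hSconn.joinedIn c₀ hc₀ β hβ
  obtain ⟨δ, hδ, hδS⟩ := (isCompact_range γ.continuous).exists_thickening_subset_open hSopen
    (range_subset_iff.2 hγS)
  obtain ⟨a, ha, haδη, hac₀⟩ := exists_pos_mul_lt_and_le_abs hc₀ne √K (lt_min hδ hη)
  obtain ⟨N, u, hN, hu₀, huN, huγ, hu⟩ :=
    γ.exists_samples_dist_succ_lt (mul_pos (sub_pos.2 hC) ha)
  have hdist (m : ℕ) : dist (pushAwayChain a u m) (u m) < min δ η := by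
    have h := dist_pushAwayChain_le ha.le u m
    rw [Fintype.card_fin] at h
    exact h.trans_lt haδη
  refine ⟨N - 1, pushAwayChain a u, hu₀, fun m _ => ?_, fun m _ k => ?_, ?_⟩
  · exact hδS (mem_thickening_iff.2 ⟨u m, huγ m, (hdist m).trans_le (min_le_left _ _)⟩)
  · exact pushAwayChain_step (by linarith) ha.le (hu₀ ▸ hac₀) (hu m).le k
  · rw [Nat.sub_add_cancel hN, mem_ball, ← huN]
    exact (hdist N).trans_le (min_le_right _ _)

/-- Deterministic reachability core of Proposition 1: under the componentwise control
`|α^k − c^k| ≤ C|c^k|` with `C > 2`, any target ball inside the open path-connected set `S`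
can be reached from any starting center in finitely many steps. -/
theorem gs_reaches_any_ball
    (K : ℕ) (hK : 1 ≤ K)
    (S : Set (EuclideanSpace ℝ (Fin K))) (hSopen : IsOpen S)
    (hSconn : IsPathConnected S)
    (C : ℝ) (hC : 2 < C)
    (c₀ : EuclideanSpace ℝ (Fin K)) (hc₀ : c₀ ∈ S) (hc₀ne : ∀ k, c₀ k ≠ 0)
    (β : EuclideanSpace ℝ (Fin K)) (hβ : β ∈ S)
    (η : ℝ) (hη : 0 < η) (hball : ball β η ⊆ S) :
    ∃ (m₀ : ℕ) (c : ℕ → EuclideanSpace ℝ (Fin K)),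
      c 0 = c₀ ∧
      (∀ m ≤ m₀ + 1, c m ∈ S) ∧
      (∀ m ≤ m₀, ∀ k : Fin K, |c (m + 1) k - c m k| ≤ C * |c m k|) ∧
      c (m₀ + 1) ∈ ball β η :=
  gs_reaches_any_ball_general K S hSopen hSconn C hC c₀ hc₀ hc₀ne β hβ η hη
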